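/- arXiv:2006.04933 — 2 statements merged into one kernel-verified Lean document; each statement's English description precedes it below -/
import Mathlib

section
/- Let G = (V, E) be a finite 3-regular connected simple graph that has a Hamiltonian cycle, and let G' be the graph obtained from G by adding one new vertex in the middle of each edge: the vertex set of G' is V ⊔ E, and for each edge e = {u, v} of G, G' has the two edges {u, e} and {v, e}. Then there exist two GTSP tours χ¹ and χ² on G' — where a GTSP tour on G' is a function from the edges of G' to ℕ such that every vertex of G' has even positive degree and the subgraph of edges with positive value is connected and spans all vertices of G' — such that (1/2)χ¹ + (1/2)χ² assigns the value 1 to every edge of G'. -/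
/-!
Let `H` be the Hamiltonian cycle. Both tours use each half of an edge of `H` once. An edge of `G`
off `H` is used twice on one of its halves and not at all on the other, and the two tours make
opposite choices, so they average to 1 everywhere. A vertex of `G` lies on an even, positive number
of edges of `H`, so its degree stays even and positive, and every subdivision vertex has degree 2.
The support is the subdivided `H`, which passes through all of `V`, with one pendant half-edge at
each remaining subdivision vertex, so it is connected.
-/

open scoped Classical

/-- The subdivision `G'` of a graph `G`: one new vertex is added in the middle of each
edge, so the vertex set is `V ⊕ G.edgeSet`, and each edge `e = {u, v}` of `G` is
replaced by the two edges `{u, e}` and `{v, e}`. -/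
def subdivision {V : Type*} (G : SimpleGraph V) : SimpleGraph (V ⊕ G.edgeSet) where
  Adj x y :=
    match x, y with
    | Sum.inl u, Sum.inr e => u ∈ (e : Sym2 V)
    | Sum.inr e, Sum.inl u => u ∈ (e : Sym2 V)
    | _, _ => False
  symm := ⟨by rintro (u | e) (w | f) h <;> exact h⟩
  loopless := ⟨by rintro (u | e) h <;> exact h⟩

/-- A GTSP tour on a finite graph `G`: a natural-number edge-multiplicity vector,
supported on the edges of `G`, with even positive degree at every vertex, whose
support is connected and spans all the vertices. -/
noncomputable def IsGTSPTour {V : Type*} [Fintype V]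
    (G : SimpleGraph V) (x : Sym2 V → ℕ) : Prop :=
  (∀ e, e ∉ G.edgeSet → x e = 0) ∧
    (∀ v : V, Even (∑ e ∈ G.incidenceFinset v, x e) ∧
      0 < ∑ e ∈ G.incidenceFinset v, x e) ∧
    (SimpleGraph.fromEdgeSet {e : Sym2 V | e ∈ G.edgeSet ∧ 0 < x e}).Connected

open Finset

namespace Sym2

variable {α : Type*}

theorem mk_out (e : Sym2 α) : s(e.out.1, e.out.2) = e :=
  e.out_eq

theorem mem_iff_eq_out_fst_or_eq_out_snd {u : α} {e : Sym2 α} :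
    u ∈ e ↔ u = e.out.1 ∨ u = e.out.2 := by
  conv_lhs => rw [← e.mk_out]
  exact mem_iff

theorem out_fst_ne_out_snd {e : Sym2 α} (he : ¬e.IsDiag) : e.out.1 ≠ e.out.2 :=
  fun h => he (e.mk_out ▸ mk_isDiag_iff.2 h)

end Sym2

namespace SimpleGraph

variable {V : Type*} {G : SimpleGraph V}

theorem mem_edgeSet_subdivision {f : Sym2 (V ⊕ G.edgeSet)} :
    f ∈ (subdivision G).edgeSet ↔
      ∃ (u : V) (e : G.edgeSet), u ∈ (e : Sym2 V) ∧ f = s(.inl u, .inr e) := by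
  induction f with
  | _ x y =>
    rcases x with u | e <;> rcases y with u' | e'
    · simp [subdivision]
    · simp [subdivision]
    · simp [subdivision, Sym2.eq_swap]
    · simp [subdivision]

variable (G) in
noncomputable def subdivisionVector (w : V → Sym2 V → ℕ) : Sym2 (V ⊕ G.edgeSet) → ℕ :=
  Sym2.lift ⟨fun x y => match x, y with
    | .inl u, .inr e | .inr e, .inl u => if u ∈ (e : Sym2 V) then w u e else 0
    | _, _ => 0,
    by rintro (u | e) (u' | e') <;> rfl⟩

@[simp]
theorem subdivisionVector_inl_inr (w : V → Sym2 V → ℕ) (u : V) (e : G.edgeSet) :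
    subdivisionVector G w s(.inl u, .inr e) = if u ∈ (e : Sym2 V) then w u e else 0 := rfl

theorem subdivisionVector_eq_zero_of_notMem {w : V → Sym2 V → ℕ} {f : Sym2 (V ⊕ G.edgeSet)}
    (hf : f ∉ (subdivision G).edgeSet) : subdivisionVector G w f = 0 := by
  induction f with
  | _ x y =>
    rcases x with u | e <;> rcases y with u' | e'
    · rfl
    · exact if_neg hf
    · exact if_neg hf
    · rfl

theorem mem_incidenceFinset_iff {W : Type*} [DecidableEq W] {H : SimpleGraph W} {w : W}
    [Fintype (H.neighborSet w)] {e : Sym2 W} :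
    e ∈ H.incidenceFinset w ↔ e ∈ H.edgeSet ∧ w ∈ e :=
  H.mem_incidenceFinset w e

theorem sum_incidenceFinset_subdivision_inl [DecidableEq V] [DecidableEq (V ⊕ G.edgeSet)]
    (w : V → Sym2 V → ℕ) (v : V) [Fintype (G.neighborSet v)]
    [Fintype ((subdivision G).neighborSet (.inl v))] :
    ∑ f ∈ (subdivision G).incidenceFinset (.inl v), subdivisionVector G w f =
      ∑ e ∈ G.incidenceFinset v, w v e := by
  have hedge {e} (he : e ∈ G.incidenceFinset v) : e ∈ G.edgeSet :=
    (mem_incidenceFinset_iff.1 he).1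
  have hmem {e} (he : e ∈ G.incidenceFinset v) : v ∈ e := (mem_incidenceFinset_iff.1 he).2
  symm
  refine sum_bij (fun e he => s(.inl v, .inr ⟨e, hedge he⟩)) (fun e he => ?_)
    (fun e₁ _ e₂ _ h => by simpa using h) (fun f hf => ?_) (fun e he => by simp [hmem he])
  · exact mem_incidenceFinset_iff.2
      ⟨mem_edgeSet_subdivision.2 ⟨v, _, hmem he, rfl⟩, Sym2.mem_mk_left _ _⟩
  · obtain ⟨hf, hvf⟩ := mem_incidenceFinset_iff.1 hf
    obtain ⟨u, e, hue, rfl⟩ := mem_edgeSet_subdivision.1 hf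
    obtain rfl : u = v := by simpa [eq_comm] using hvf
    exact ⟨e, mem_incidenceFinset_iff.2 ⟨e.2, hue⟩, rfl⟩

theorem sum_incidenceFinset_subdivision_inr [DecidableEq (V ⊕ G.edgeSet)] (w : V → Sym2 V → ℕ)
    (e : G.edgeSet) [Fintype ((subdivision G).neighborSet (.inr e))] :
    ∑ f ∈ (subdivision G).incidenceFinset (.inr e), subdivisionVector G w f =
      w (e : Sym2 V).out.1 e + w (e : Sym2 V).out.2 e := by
  set a := (e : Sym2 V).out.1
  set b := (e : Sym2 V).out.2
  have hab : (e : Sym2 V) = s(a, b) := (Sym2.mk_out _).symm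
  have hinc : (subdivision G).incidenceFinset (.inr e) = {s(.inl a, .inr e), s(.inl b, .inr e)} := by
    ext f
    rw [mem_incidenceFinset_iff, mem_edgeSet_subdivision]
    constructor
    · rintro ⟨⟨u, e', hu, rfl⟩, he⟩
      obtain rfl : e' = e := by simpa [eq_comm] using he
      simpa [hab] using hu
    · intro hf
      simp only [mem_insert, mem_singleton] at hf
      refine ⟨?_, by rcases hf with rfl | rfl <;> simp⟩
      rcases hf with rfl | rfl
      · exact ⟨a, e, by simp [hab], rfl⟩
      · exact ⟨b, e, by simp [hab], rfl⟩
  have hne : a ≠ b := Sym2.out_fst_ne_out_snd (G.not_isDiag_of_mem_edgeSet e.2)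
  rw [hinc, sum_pair (by simpa using hne)]
  simp [hab]

noncomputable def halfEdgeWeight (C : Set (Sym2 V)) (pick : Sym2 V → V) (u : V) (e : Sym2 V) : ℕ :=
  if e ∈ C then 1 else if u = pick e then 2 else 0

theorem sum_halfEdgeWeight (C : Set (Sym2 V)) (pick : Sym2 V → V) (u : V) (s : Finset (Sym2 V)) :
    ∑ e ∈ s, halfEdgeWeight C pick u e = #{e ∈ s | e ∈ C} + 2 * #{e ∈ s | e ∉ C ∧ u = pick e} := by
  rw [card_filter, card_filter, mul_sum, ← sum_add_distrib]
  refine sum_congr rfl fun e _ => ?_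
  unfold halfEdgeWeight
  split_ifs <;> simp_all

theorem halfEdgeWeight_pos_iff {C : Set (Sym2 V)} {pick : Sym2 V → V} {u : V} {e : Sym2 V} :
    0 < halfEdgeWeight C pick u e ↔ e ∈ C ∨ u = pick e := by
  unfold halfEdgeWeight
  split_ifs <;> simp_all

theorem halfEdgeWeight_out_fst_add_halfEdgeWeight_out_snd {C : Set (Sym2 V)} {pick : Sym2 V → V}
    {e : Sym2 V} (he : ¬e.IsDiag) (hpick : pick e ∈ e) :
    halfEdgeWeight C pick e.out.1 e + halfEdgeWeight C pick e.out.2 e = 2 := by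
  have hne := Sym2.out_fst_ne_out_snd he
  rw [Sym2.mem_iff_eq_out_fst_or_eq_out_snd] at hpick
  unfold halfEdgeWeight
  split_ifs <;> grind

theorem halfEdgeWeight_out_fst_add_out_snd (C : Set (Sym2 V)) {u : V} {e : Sym2 V}
    (he : ¬e.IsDiag) (hu : u ∈ e) :
    halfEdgeWeight C (·.out.1) u e + halfEdgeWeight C (·.out.2) u e = 2 := by
  have hne := Sym2.out_fst_ne_out_snd he
  rw [Sym2.mem_iff_eq_out_fst_or_eq_out_snd] at hu
  unfold halfEdgeWeight
  split_ifs <;> grind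

namespace Walk

theorem IsTrail.card_filter_incidenceFinset_mem_edges [DecidableEq V] {u v : V} {p : G.Walk u v}
    (hp : p.IsTrail) (x : V) [Fintype (G.neighborSet x)] :
    #{e ∈ G.incidenceFinset x | e ∈ p.edges} = p.edges.countP (x ∈ ·) := by
  rw [List.countP_eq_length_filter, ← List.toFinset_card_of_nodup (hp.edges_nodup.filter _)]
  congr 1
  ext e
  simp only [mem_filter, mem_incidenceFinset_iff, List.mem_toFinset, List.mem_filter,
    decide_eq_true_eq]
  exact ⟨fun ⟨⟨_, hx⟩, he⟩ => ⟨he, hx⟩, fun ⟨he, hx⟩ => ⟨⟨p.edges_subset_edgeSet he, hx⟩, he⟩⟩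

theorem IsCircuit.even_card_filter_incidenceFinset_mem_edges [DecidableEq V] {v : V}
    {p : G.Walk v v} (hp : p.IsCircuit) (x : V) [Fintype (G.neighborSet x)] :
    Even #{e ∈ G.incidenceFinset x | e ∈ p.edges} := by
  rw [hp.isTrail.card_filter_incidenceFinset_mem_edges, hp.isTrail.even_countP_edges_iff]
  exact fun h => absurd rfl h

theorem IsCircuit.card_filter_incidenceFinset_mem_edges_pos [DecidableEq V] {v : V}
    {p : G.Walk v v} (hp : p.IsCircuit) {x : V} (hx : x ∈ p.support) [Fintype (G.neighborSet x)] :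
    0 < #{e ∈ G.incidenceFinset x | e ∈ p.edges} := by
  obtain ⟨e, he, hxe⟩ := (mem_support_iff_exists_mem_edges_of_not_nil hp.not_nil).1 hx
  exact card_pos.2 ⟨e, mem_filter.2 ⟨mem_incidenceFinset_iff.2 ⟨p.edges_subset_edgeSet he, hxe⟩, he⟩⟩

end Walk

theorem connected_support_subdivisionVector {w : V → Sym2 V → ℕ} {v₀ v₁ : V} (p : G.Walk v₀ v₁)
    (hspan : ∀ v, v ∈ p.support) (hpath : ∀ e ∈ p.edges, ∀ u ∈ e, 0 < w u e)
    (hleaf : ∀ e ∈ G.edgeSet, ∃ u ∈ e, 0 < w u e) :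
    (fromEdgeSet {f | f ∈ (subdivision G).edgeSet ∧ 0 < subdivisionVector G w f}).Connected := by
  set S := fromEdgeSet {f | f ∈ (subdivision G).edgeSet ∧ 0 < subdivisionVector G w f}
  have adj (u : V) (e : G.edgeSet) (hu : u ∈ (e : Sym2 V)) (hw : 0 < w u e) :
      S.Adj (.inl u) (.inr e) := by
    rw [fromEdgeSet_adj]
    exact ⟨⟨mem_edgeSet_subdivision.2 ⟨u, e, hu, rfl⟩, by simpa [hu] using hw⟩, by simp⟩
  have reach {a b : V} (q : G.Walk a b) (hq : q.edges ⊆ p.edges) :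
      S.Reachable (.inl a) (.inl b) := by
    induction q with
    | nil => rfl
    | @cons a c b h q ih =>
      have hac : s(a, c) ∈ p.edges := hq (by simp)
      let e : G.edgeSet := ⟨s(a, c), h⟩
      exact ((adj a e (by simp [e]) (hpath _ hac _ (by simp))).reachable.trans
        (adj c e (by simp [e]) (hpath _ hac _ (by simp))).reachable.symm).trans
        (ih fun f hf => hq (by simp [hf]))
  have hV (u : V) : S.Reachable (.inl v₀) (.inl u) :=
    reach (p.takeUntil u (hspan u)) (p.edges_takeUntil_subset_edges (hspan u))
  refine (connected_iff_exists_forall_reachable S).2 ⟨.inl v₀, ?_⟩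
  rintro (u | e)
  · exact hV u
  · obtain ⟨u, hu, hw⟩ := hleaf e e.2
    exact (hV u).trans (adj u e hu hw).reachable

theorem isGTSPTour_subdivisionVector_halfEdgeWeight [Fintype V] [DecidableEq V]
    [DecidableRel G.Adj]
    {v₀ : V} {p : G.Walk v₀ v₀} (hp : p.IsCircuit) (hspan : ∀ v, v ∈ p.support)
    {pick : Sym2 V → V} (hpick : ∀ e, pick e ∈ e) :
    IsGTSPTour (subdivision G) (subdivisionVector G (halfEdgeWeight p.edgeSet pick)) := by
  refine ⟨fun f => subdivisionVector_eq_zero_of_notMem, ?_, ?_⟩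
  · rintro (v | e)
    · simp only [sum_incidenceFinset_subdivision_inl, sum_halfEdgeWeight, Walk.mem_edgeSet]
      exact ⟨(hp.even_card_filter_incidenceFinset_mem_edges v).add (even_two_mul _),
        (hp.card_filter_incidenceFinset_mem_edges_pos (hspan v)).trans_le (Nat.le_add_right _ _)⟩
    · simp only [sum_incidenceFinset_subdivision_inr,
        halfEdgeWeight_out_fst_add_halfEdgeWeight_out_snd
          (G.not_isDiag_of_mem_edgeSet e.2) (hpick _)]
      exact ⟨even_two, two_pos⟩
  · refine connected_support_subdivisionVector p hspan
      (fun e he u _ => halfEdgeWeight_pos_iff.2 (.inl he))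
      (fun e _ => ⟨pick e, hpick e, halfEdgeWeight_pos_iff.2 (.inr rfl)⟩)

end SimpleGraph

theorem hamiltonian_gives_two_tours_averaging_to_one_general {V : Type*} [Fintype V] [DecidableEq V]
    (G : SimpleGraph V) [DecidableRel G.Adj]
    (hham : ∃ (v : V) (p : G.Walk v v), p.IsHamiltonianCycle) :
    ∃ χ₁ χ₂ : Sym2 (V ⊕ G.edgeSet) → ℕ,
      IsGTSPTour (subdivision G) χ₁ ∧ IsGTSPTour (subdivision G) χ₂ ∧
        ∀ e ∈ (subdivision G).edgeSet, (χ₁ e : ℝ) / 2 + (χ₂ e : ℝ) / 2 = 1 := by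
  obtain ⟨v₀, p, hp⟩ := hham
  have htour {pick : Sym2 V → V} (hpick : ∀ e, pick e ∈ e) :=
    SimpleGraph.isGTSPTour_subdivisionVector_halfEdgeWeight hp.isCycle.isCircuit hp.mem_support
      hpick
  refine ⟨_, _, htour Sym2.out_fst_mem, htour Sym2.out_snd_mem, fun f hf => ?_⟩
  obtain ⟨u, e, hu, rfl⟩ := SimpleGraph.mem_edgeSet_subdivision.1 hf
  have hsum := SimpleGraph.halfEdgeWeight_out_fst_add_out_snd p.edgeSet
    (G.not_isDiag_of_mem_edgeSet e.2) hu
  simp only [SimpleGraph.subdivisionVector_inl_inr, if_pos hu]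
  rw [← add_div, ← Nat.cast_add, hsum]
  norm_num

/-- if a finite 3-regular connected simple graph `G` has a Hamiltonian
cycle, then there are two GTSP tours `χ¹, χ²` on the subdivision `G'` of `G` whose
average `(1/2)χ¹ + (1/2)χ²` assigns the value 1 to every edge of `G'`. -/
theorem hamiltonian_gives_two_tours_averaging_to_one {V : Type*} [Fintype V] [DecidableEq V]
    (G : SimpleGraph V) [DecidableRel G.Adj]
    (hreg : ∀ v : V, G.degree v = 3) (hconn : G.Connected)
    (hham : ∃ (v : V) (p : G.Walk v v), p.IsHamiltonianCycle) :
    ∃ χ₁ χ₂ : Sym2 (V ⊕ G.edgeSet) → ℕ,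
      IsGTSPTour (subdivision G) χ₁ ∧ IsGTSPTour (subdivision G) χ₂ ∧
        ∀ e ∈ (subdivision G).edgeSet, (χ₁ e : ℝ) / 2 + (χ₂ e : ℝ) / 2 = 1 :=
  hamiltonian_gives_two_tours_averaging_to_one_general G hham
end

section
/- Let G = (V, E) be a finite 3-regular connected simple graph, and let G' be the graph obtained from G by adding one new vertex in the middle of each edge: the vertex set of G' is V ⊔ E, and for each edge e = {u, v} of G, G' has the two edges {u, e} and {v, e}. Suppose the all-ones vector on the edges of G' can be written as ∑_k λ_k χ^k, where the λ_k > 0 are real numbers summing to 1 and each χ^k is a GTSP tour on G' — a function from the edges of G' to ℕ such that every vertex of G' has even positive degree and the subgraph of edges with positive value is connected and spans all vertices of G'. Then G has a Hamiltonian cycle. -/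
open scoped Classical

/-!
Every tour has even positive degree, hence degree at least 2, at each subdivision vertex, while
the convex combination has degree exactly 2 there; so every tour splits each edge of `G` as
`1 + 1` or `2 + 0`. Fix one tour and let `H` be the graph of the edges it splits `1 + 1`. A
subdivision vertex split `2 + 0` is a dead end of the support of the tour, so `H` inherits its
connectivity. At an original vertex the three values lie in `{0, 1, 2}` and have even sum, so an
even number of them, hence exactly two, equal `1`. A connected `2`-regular graph is a Hamiltonian
cycle.
-/

open Finset

lemma Finset.even_card_filter_eq_one_of_le_two {ι : Type*} {s : Finset ι} {f : ι → ℕ}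
    (hf : ∀ i ∈ s, f i ≤ 2) (h : Even (∑ i ∈ s, f i)) : Even #{i ∈ s | f i = 1} := by
  rw [Finset.even_sum_iff_even_card_odd] at h
  convert h using 2
  refine Finset.filter_congr fun i hi => ?_
  have := hf i hi
  interval_cases f i <;> decide

namespace SimpleGraph

variable {V : Type*} {G : SimpleGraph V}

/-- The edges of the subdivision are in bijection with the darts of `G`: the dart `(u, v)`
corresponds to the half `{u, e}` of the edge `e = {u, v}`. -/
def Dart.subdivisionEdge (d : G.Dart) : Sym2 (V ⊕ G.edgeSet) :=
  s(Sum.inl d.fst, Sum.inr ⟨d.edge, d.edge_mem⟩)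

lemma not_subdivision_adj_inl_inl {u v : V} : ¬ (subdivision G).Adj (Sum.inl u) (Sum.inl v) :=
  id

lemma not_subdivision_adj_inr_inr {e f : G.edgeSet} :
    ¬ (subdivision G).Adj (Sum.inr e) (Sum.inr f) :=
  id

lemma Dart.subdivisionEdge_mem_edgeSet (d : G.Dart) :
    d.subdivisionEdge ∈ (subdivision G).edgeSet :=
  Sym2.mem_mk_left _ _

lemma Dart.subdivisionEdge_eq_of_edge_eq {d : G.Dart} {e : G.edgeSet} (h : d.edge = e) :
    d.subdivisionEdge = s(.inl d.fst, .inr e) := by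
  have : (⟨d.edge, d.edge_mem⟩ : G.edgeSet) = e := Subtype.ext h
  rw [Dart.subdivisionEdge, this]

lemma Dart.inl_mem_subdivisionEdge_iff {d : G.Dart} {v : V} :
    Sum.inl v ∈ d.subdivisionEdge ↔ d.fst = v := by
  simp [Dart.subdivisionEdge, eq_comm]

lemma Dart.inr_mem_subdivisionEdge_iff {d : G.Dart} {e : G.edgeSet} :
    Sum.inr e ∈ d.subdivisionEdge ↔ d.edge = e := by
  simp [Dart.subdivisionEdge, eq_comm, Subtype.ext_iff]

lemma Dart.subdivisionEdge_injective :
    Function.Injective (Dart.subdivisionEdge : G.Dart → Sym2 (V ⊕ G.edgeSet)) := by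
  intro d d' h
  simp only [Dart.subdivisionEdge, Sym2.eq_iff, Sum.inl.injEq, Sum.inr.injEq, Subtype.mk.injEq,
    reduceCtorEq, and_false, or_false] at h
  obtain ⟨hfst, hedge⟩ := h
  rcases (dart_edge_eq_iff d d').mp hedge with rfl | rfl
  · rfl
  · exact absurd hfst d'.snd_ne_fst

lemma exists_dart_subdivisionEdge_eq {u : V} {e : G.edgeSet} (hu : u ∈ (e : Sym2 V)) :
    ∃ d : G.Dart, d.subdivisionEdge = s(Sum.inl u, Sum.inr e) := by
  have he : s(u, Sym2.Mem.other hu) = e := Sym2.other_spec hu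
  exact ⟨⟨(u, Sym2.Mem.other hu), by rw [← mem_edgeSet, he]; exact e.2⟩,
    Dart.subdivisionEdge_eq_of_edge_eq he⟩

lemma mem_edgeSet_subdivision_iff {g : Sym2 (V ⊕ G.edgeSet)} :
    g ∈ (subdivision G).edgeSet ↔ ∃ d : G.Dart, d.subdivisionEdge = g := by
  refine ⟨fun hg => ?_, fun ⟨d, hd⟩ => hd ▸ d.subdivisionEdge_mem_edgeSet⟩
  induction g using Sym2.ind with
  | _ a b =>
    rcases a with u | e <;> rcases b with w | f <;> simp only [mem_edgeSet] at hg
    · exact hg.elim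
    · exact exists_dart_subdivisionEdge_eq hg
    · simpa only [Sym2.eq_swap] using exists_dart_subdivisionEdge_eq hg
    · exact hg.elim

lemma mem_incidenceSet_subdivision_inl_iff {v : V} {g : Sym2 (V ⊕ G.edgeSet)} :
    g ∈ (subdivision G).incidenceSet (Sum.inl v) ↔
      ∃ d : G.Dart, d.fst = v ∧ d.subdivisionEdge = g := by
  simp only [incidenceSet, Set.mem_ofPred_eq, mem_edgeSet_subdivision_iff]
  grind [Dart.inl_mem_subdivisionEdge_iff]

lemma mem_incidenceSet_subdivision_inr_iff {e : G.edgeSet} {g : Sym2 (V ⊕ G.edgeSet)} :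
    g ∈ (subdivision G).incidenceSet (Sum.inr e) ↔
      ∃ d : G.Dart, d.edge = e ∧ d.subdivisionEdge = g := by
  simp only [incidenceSet, Set.mem_ofPred_eq, mem_edgeSet_subdivision_iff]
  grind [Dart.inr_mem_subdivisionEdge_iff]

def unitDartGraph (y : G.Dart → ℕ) : SimpleGraph V where
  Adj u v := ∃ d : G.Dart, d.toProd = (u, v) ∧ y d = 1 ∧ y d.symm = 1
  symm := ⟨fun _ _ ⟨d, hd, h, h'⟩ =>
    ⟨d.symm, by simp [Dart.symm, hd], h', by rwa [d.symm_symm]⟩⟩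
  loopless := ⟨fun v ⟨d, hd, _⟩ => d.fst_ne_snd (by simp_all [Prod.ext_iff])⟩

lemma unitDartGraph_le (y : G.Dart → ℕ) : unitDartGraph y ≤ G := by
  rintro u v ⟨⟨⟨_, _⟩, h⟩, hd, -⟩
  obtain ⟨rfl, rfl⟩ := Prod.ext_iff.mp hd
  exact h

lemma neighborSet_unitDartGraph {y : G.Dart → ℕ} (hy : ∀ d, y d + y d.symm = 2) (v : V) :
    (unitDartGraph y).neighborSet v = (·.snd) '' {d | d.fst = v ∧ y d = 1} := by
  ext w
  simp only [mem_neighborSet, unitDartGraph, Set.mem_image, Set.mem_ofPred_eq, Prod.ext_iff]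
  grind

lemma unitDartGraph_reachable_of_pos {x : Sym2 (V ⊕ G.edgeSet) → ℕ}
    (hhalves : ∀ d : G.Dart, x d.subdivisionEdge + x d.symm.subdivisionEdge = 2) {e : G.edgeSet}
    {u v : V} (hue : u ∈ (e : Sym2 V)) (hve : v ∈ (e : Sym2 V))
    (hu : 0 < x s(.inl u, .inr e)) (hv : 0 < x s(.inl v, .inr e)) :
    (unitDartGraph fun d => x d.subdivisionEdge).Reachable u v := by
  rcases eq_or_ne u v with rfl | huv
  · rfl
  have he : s(u, v) = (e : Sym2 V) := ((Sym2.mem_and_mem_iff huv).mp ⟨hue, hve⟩).symm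
  let d : G.Dart := ⟨(u, v), by rw [← mem_edgeSet, he]; exact e.2⟩
  have hd : d.subdivisionEdge = s(.inl u, .inr e) := Dart.subdivisionEdge_eq_of_edge_eq he
  have hd' : d.symm.subdivisionEdge = s(.inl v, .inr e) :=
    Dart.subdivisionEdge_eq_of_edge_eq (d.edge_symm.trans he)
  have := hhalves d
  rw [hd, hd'] at this
  exact Adj.reachable ⟨d, rfl, by simp only [hd]; omega, by simp only [hd']; omega⟩

section Finite

variable [Fintype V] [DecidableEq V] [DecidableRel G.Adj]

lemma sum_incidenceFinset_subdivision_inl_s12 {M : Type*} [AddCommMonoid M] (v : V)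
    [DecidableEq (V ⊕ G.edgeSet)] [Fintype ((subdivision G).neighborSet (Sum.inl v))]
    (x : Sym2 (V ⊕ G.edgeSet) → M) :
    ∑ g ∈ (subdivision G).incidenceFinset (Sum.inl v), x g =
      ∑ d : G.Dart with d.fst = v, x d.subdivisionEdge := by
  have : (subdivision G).incidenceFinset (Sum.inl v) =
      ({d : G.Dart | d.fst = v} : Finset _).image Dart.subdivisionEdge := by
    ext g
    simp [mem_incidenceSet_subdivision_inl_iff]
  rw [this, Finset.sum_image Dart.subdivisionEdge_injective.injOn]

lemma sum_incidenceFinset_subdivision_inr_s12 {M : Type*} [AddCommMonoid M] (d : G.Dart)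
    [DecidableEq (V ⊕ G.edgeSet)]
    [Fintype ((subdivision G).neighborSet (Sum.inr ⟨d.edge, d.edge_mem⟩))]
    (x : Sym2 (V ⊕ G.edgeSet) → M) :
    ∑ g ∈ (subdivision G).incidenceFinset (Sum.inr ⟨d.edge, d.edge_mem⟩), x g =
      x d.subdivisionEdge + x d.symm.subdivisionEdge := by
  have : (subdivision G).incidenceFinset (Sum.inr ⟨d.edge, d.edge_mem⟩) =
      ({d' : G.Dart | d'.edge = d.edge} : Finset _).image Dart.subdivisionEdge := by
    ext g
    simp [mem_incidenceSet_subdivision_inr_iff]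
  rw [this, Finset.sum_image Dart.subdivisionEdge_injective.injOn, Dart.edge_fiber,
    Finset.sum_pair d.symm_ne.symm]

lemma ncard_neighborSet_unitDartGraph {y : G.Dart → ℕ} (hy : ∀ d, y d + y d.symm = 2)
    (v : V) :
    ((unitDartGraph y).neighborSet v).ncard = #{d : G.Dart | d.fst = v ∧ y d = 1} := by
  have hinj : Set.InjOn (·.snd) {d : G.Dart | d.fst = v ∧ y d = 1} := by
    rintro d ⟨rfl, -⟩ d' ⟨hfst, -⟩ hsnd
    exact Dart.ext _ _ (Prod.ext hfst.symm hsnd)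
  rw [neighborSet_unitDartGraph hy, hinj.ncard_image, ← Set.ncard_coe_finset,
    Finset.coe_filter_univ]

lemma ncard_neighborSet_unitDartGraph_eq_two {y : G.Dart → ℕ} (hy : ∀ d, y d + y d.symm = 2)
    {v : V} (hdeg : G.degree v = 3) (heven : Even (∑ d : G.Dart with d.fst = v, y d))
    (hadj : ∃ w, (unitDartGraph y).Adj v w) :
    ((unitDartGraph y).neighborSet v).ncard = 2 := by
  have hpos : 0 < ((unitDartGraph y).neighborSet v).ncard :=
    (Set.ncard_pos (Set.toFinite _)).mpr hadj
  rw [ncard_neighborSet_unitDartGraph hy, ← Finset.filter_filter] at hpos ⊢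
  have hle : #{d ∈ ({d : G.Dart | d.fst = v} : Finset _) | y d = 1} ≤ 3 :=
    (Finset.card_filter_le _ _).trans (dart_fst_fiber_card_eq_degree G v ▸ hdeg.le)
  obtain ⟨r, hr⟩ :=
    Finset.even_card_filter_eq_one_of_le_two (fun d _ => by linarith [hy d]) heven
  omega

end Finite

lemma reachable_of_reachable_inl {W : Type*} {S : SimpleGraph (V ⊕ W)} {H : SimpleGraph V}
    (hVV : ∀ u v, ¬ S.Adj (.inl u) (.inl v)) (hWW : ∀ e f, ¬ S.Adj (.inr e) (.inr f))
    (hW : ∀ e u v, S.Adj (.inr e) (.inl u) → S.Adj (.inr e) (.inl v) → H.Reachable u v)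
    {a b : V} (h : S.Reachable (.inl a) (.inl b)) : H.Reachable a b := by
  suffices key : ∀ {c c'} (p : S.Walk c c') (u v : V), (c = .inl u ∨ S.Adj c (.inl u)) →
      c' = .inl v → H.Reachable u v from
    key h.some a b (.inl rfl) rfl
  intro c c' p
  induction p with
  | nil =>
    rintro u v (rfl | hadj) hv
    · exact (Sum.inl.inj hv).symm ▸ .rfl
    · exact (hVV _ _ (hv ▸ hadj)).elim
  | @cons c c'' c' hadj p ih =>
    rintro u v (rfl | hcu) rfl
    · exact ih u v (.inr hadj.symm) rfl
    · rcases c with w | e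
      · exact (hVV _ _ hcu).elim
      rcases c'' with w | f
      · exact (hW e u w hcu hadj).trans (ih w v (.inl rfl) rfl)
      · exact (hWW _ _ hadj).elim

lemma Walk.IsCycle.isHamiltonianCycle_of_forall_mem_support [DecidableEq V] {H : SimpleGraph V}
    {v : V} {p : H.Walk v v} (hp : p.IsCycle) (h : ∀ w, w ∈ p.support) :
    p.IsHamiltonianCycle := by
  refine ⟨hp, hp.isPath_tail.isHamiltonian_iff.mpr fun w => ?_⟩
  rw [p.support_tail_of_not_nil hp.not_nil]
  have hw := h w
  rw [← p.cons_tail_support, List.mem_cons] at hw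
  rcases hw with rfl | hw
  · exact Walk.end_mem_tail_support hp.not_nil
  · exact hw

lemma Connected.exists_isHamiltonianCycle_of_ncard_neighborSet_eq_two [Finite V] [DecidableEq V]
    {H : SimpleGraph V} (hconn : H.Connected) (hdeg : ∀ v, (H.neighborSet v).ncard = 2) :
    ∃ (v : V) (p : H.Walk v v), p.IsHamiltonianCycle := by
  obtain ⟨v⟩ := hconn.nonempty
  obtain ⟨p, hp, hverts⟩ :=
    IsCycles.exists_cycle_toSubgraph_verts_eq_connectedComponentSupp (fun w _ => hdeg w)
      (c := H.connectedComponentMk v) rfl (Set.nonempty_of_ncard_ne_zero (by simp [hdeg]))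
  refine ⟨v, p, hp.isHamiltonianCycle_of_forall_mem_support fun w => ?_⟩
  rw [← Walk.mem_verts_toSubgraph, hverts, ConnectedComponent.mem_supp_iff,
    ConnectedComponent.eq]
  exact hconn.preconnected w v

end SimpleGraph

namespace IsGTSPTour

open SimpleGraph

variable {V : Type*} [Fintype V] {G : SimpleGraph V} [DecidableRel G.Adj]
  {x : Sym2 (V ⊕ G.edgeSet) → ℕ}

lemma two_le_add_symm [DecidableEq V] (hx : IsGTSPTour (subdivision G) x) (d : G.Dart) :
    2 ≤ x d.subdivisionEdge + x d.symm.subdivisionEdge := by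
  obtain ⟨⟨r, hr⟩, hpos⟩ := hx.2.1 (.inr ⟨d.edge, d.edge_mem⟩)
  rw [sum_incidenceFinset_subdivision_inr_s12] at hr hpos
  omega

lemma even_sum_fst [DecidableEq V] (hx : IsGTSPTour (subdivision G) x) (v : V) :
    Even (∑ d : G.Dart with d.fst = v, x d.subdivisionEdge) := by
  simpa only [sum_incidenceFinset_subdivision_inl_s12] using (hx.2.1 (.inl v)).1

lemma connected_unitDartGraph [Nonempty V] (hx : IsGTSPTour (subdivision G) x)
    (hhalves : ∀ d : G.Dart, x d.subdivisionEdge + x d.symm.subdivisionEdge = 2) :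
    (unitDartGraph fun d => x d.subdivisionEdge).Connected := by
  have hS {c c'} (h : (fromEdgeSet {g | g ∈ (subdivision G).edgeSet ∧ 0 < x g}).Adj c c') :
      (subdivision G).Adj c c' ∧ 0 < x s(c, c') :=
    (fromEdgeSet_adj _).mp h |>.1
  refine (connected_iff _).mpr ⟨fun a b => reachable_of_reachable_inl
    (fun u v h => not_subdivision_adj_inl_inl (hS h).1)
    (fun e f h => not_subdivision_adj_inr_inr (hS h).1)
    (fun e u v hu hv => ?_) (hx.2.2.preconnected (.inl a) (.inl b)), inferInstance⟩
  obtain ⟨hue, hu⟩ := hS hu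
  obtain ⟨hve, hv⟩ := hS hv
  rw [Sym2.eq_swap] at hu hv
  exact unitDartGraph_reachable_of_pos hhalves hue hve hu hv

end IsGTSPTour

lemma eq_of_forall_le_of_sum_mul_eq {ι : Type*} [Fintype ι] {w a : ι → ℝ} {c : ℝ}
    (hw : ∀ k, 0 < w k) (hle : ∀ k, c ≤ a k) (h : ∑ k, w k * a k = ∑ k, w k * c)
    (k : ι) :
    a k = c := by
  have := (Finset.sum_eq_sum_iff_of_le fun k _ => mul_le_mul_of_nonneg_left (hle k) (hw k).le).mp
    h.symm k (Finset.mem_univ k)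
  exact (mul_left_cancel₀ (hw k).ne' this).symm

lemma subdivisionEdge_add_symm_eq_two_of_convex_combination {V : Type*} [Fintype V]
    [DecidableEq V] {G : SimpleGraph V} [DecidableRel G.Adj] {ι : Type*} [Fintype ι]
    {lam : ι → ℝ} {χ : ι → Sym2 (V ⊕ G.edgeSet) → ℕ} (hlam : ∀ k, 0 < lam k)
    (hsum : ∑ k, lam k = 1) (hχ : ∀ k, IsGTSPTour (subdivision G) (χ k))
    (hone : ∀ e ∈ (subdivision G).edgeSet, ∑ k, lam k * (χ k e : ℝ) = 1)
    (k : ι) (d : G.Dart) :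
    χ k d.subdivisionEdge + χ k d.symm.subdivisionEdge = 2 := by
  have := eq_of_forall_le_of_sum_mul_eq (c := 2)
    (a := fun k => ((χ k d.subdivisionEdge + χ k d.symm.subdivisionEdge : ℕ) : ℝ)) hlam
    (fun k => by exact_mod_cast (hχ k).two_le_add_symm d) (by
      simp only [Nat.cast_add, mul_add, Finset.sum_add_distrib, ← Finset.sum_mul, hsum,
        hone _ d.subdivisionEdge_mem_edgeSet, hone _ d.symm.subdivisionEdge_mem_edgeSet]
      norm_num) k
  exact_mod_cast this

/-- if the all-ones vector on the edges of the subdivision `G'` of a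
finite 3-regular connected simple graph `G` is a convex combination (with positive
weights) of GTSP tours on `G'`, then `G` has a Hamiltonian cycle. -/
theorem all_ones_convex_combination_gives_hamiltonian {V : Type*} [Fintype V] [DecidableEq V]
    (G : SimpleGraph V) [DecidableRel G.Adj]
    (hreg : ∀ v : V, G.degree v = 3) (hconn : G.Connected)
    {ι : Type*} [Fintype ι]
    (lam : ι → ℝ) (χ : ι → Sym2 (V ⊕ G.edgeSet) → ℕ)
    (hlam : ∀ k, 0 < lam k) (hsum : ∑ k, lam k = 1)
    (hχ : ∀ k, IsGTSPTour (subdivision G) (χ k))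
    (hone : ∀ e ∈ (subdivision G).edgeSet, ∑ k, lam k * (χ k e : ℝ) = 1) :
    ∃ (v : V) (p : G.Walk v v), p.IsHamiltonianCycle := by
  obtain ⟨k, -⟩ := Finset.nonempty_of_sum_ne_zero (hsum ▸ one_ne_zero : ∑ k, lam k ≠ 0)
  have hhalves := subdivisionEdge_add_symm_eq_two_of_convex_combination hlam hsum hχ hone k
  have : Nonempty V := hconn.nonempty
  have : Nontrivial V :=
    SimpleGraph.nontrivial_of_degree_ne_zero (G := G) (v := Classical.arbitrary V) (by simp [hreg])
  have hH := (hχ k).connected_unitDartGraph hhalves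
  obtain ⟨v, p, hp⟩ := hH.exists_isHamiltonianCycle_of_ncard_neighborSet_eq_two fun v =>
    SimpleGraph.ncard_neighborSet_unitDartGraph_eq_two hhalves (hreg v) ((hχ k).even_sum_fst v)
      (hH.preconnected.exists_adj_of_nontrivial v)
  exact ⟨v, p.map (.ofLE (SimpleGraph.unitDartGraph_le _)), hp.map Function.bijective_id⟩
end
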